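/- arXiv:1904.04574 — 2 statements merged into one kernel-verified Lean document; each statement's English description precedes it below -/
import Mathlib

section
/- Let Q = (0,1)ⁿ, μ be a finite signed Borel measure on Q, and let (μ_t)_{t∈(0,1)} be a disintegration of μ with respect to one-dimensional Lebesgue measure λ₁. Let μ_a be the absolutely continuous part of μ with respect to n-dimensional Lebesgue measure λₙ, and for each t let (μ_t)_a be the absolutely continuous part of μ_t with respect to (n−1)-dimensional Lebesgue measure λ_{n−1}. Then ((μ_t)_a)_{t∈(0,1)} is a disintegration of μ_a with respect to λ₁; i.e. for every Borel B ⊂ Q the function t ↦ (μ_t)_a(B^t) is measurable and integrable, and μ_a(B) = ∫₀¹ (μ_t)_a(B^t) dt. -/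
open MeasureTheory Set

/-- The open unit cube `(0,1)ⁿ`. -/
def unitCube (n : ℕ) : Set (Fin n → ℝ) := Set.pi Set.univ fun _ => Set.Ioo (0 : ℝ) 1

/-- `(μt)_{t∈(0,1)}` is a disintegration of the finite signed measure `μ` on `(0,1)^{n+1}`
with respect to one-dimensional Lebesgue measure. -/
def IsDisint (n : ℕ) (μ : SignedMeasure (Fin (n + 1) → ℝ))
    (μt : ℝ → SignedMeasure (Fin n → ℝ)) : Prop :=
  (∀ t ∈ Set.Ioo (0 : ℝ) 1, (μt t).totalVariation (unitCube n)ᶜ = 0) ∧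
  ∀ B : Set (Fin (n + 1) → ℝ), MeasurableSet B → B ⊆ unitCube (n + 1) →
    IntegrableOn (fun t => μt t {y | Fin.snoc y t ∈ B}) (Set.Ioo (0 : ℝ) 1) volume ∧
    μ B = ∫ t in Set.Ioo (0 : ℝ) 1, μt t {y | Fin.snoc y t ∈ B}

/-- The Lebesgue decomposition of a finite signed measure with respect to Lebesgue measure:
`μ = (singular part) + (volume with density g)` with `g` integrable; `volume.withDensityᵥ g`
is then the absolutely continuous part of `μ`. -/
def IsLebDecomp {n : ℕ} (μ : SignedMeasure (Fin n → ℝ)) (g : (Fin n → ℝ) → ℝ) : Prop :=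
  Integrable g volume ∧
  ∃ μs : SignedMeasure (Fin n → ℝ), μs.totalVariation ⟂ₘ (volume : Measure (Fin n → ℝ)) ∧
    (μ : VectorMeasure (Fin n → ℝ) ℝ) = μs + volume.withDensityᵥ g

section Helpers

variable {X : Type*} [MeasurableSpace X]

lemma countable_generatePiSystem {S : Set (Set X)} (hS : S.Countable) :
    (generatePiSystem S).Countable := by
  have hsub : generatePiSystem S ⊆ (fun F => ⋂₀ F) '' {F : Set (Set X) | F.Finite ∧ F ⊆ S} := by
    intro A hA
    induction hA with
    | base h =>
      exact ⟨{_}, ⟨finite_singleton _, singleton_subset_iff.2 h⟩, sInter_singleton _⟩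
    | inter hs ht _ ihs iht =>
      obtain ⟨F1, hF1, rfl⟩ := ihs
      obtain ⟨F2, hF2, rfl⟩ := iht
      exact ⟨F1 ∪ F2, ⟨hF1.1.union hF2.1, union_subset hF1.2 hF2.2⟩,
        by simp only []; rw [sInter_union]⟩
  exact (((countable_setOf_finite_subset hS).mono
    (by intro x hx; exact ⟨hx.1, hx.2⟩)).image _).mono hsub

lemma signed_val_eq (ν : SignedMeasure X) {A : Set X} (hA : MeasurableSet A) :
    ν A = (ν.toJordanDecomposition.posPart A).toReal
        - (ν.toJordanDecomposition.negPart A).toReal := by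
  conv_lhs => rw [← ν.toSignedMeasure_toJordanDecomposition]
  exact Measure.toSignedMeasure_sub_apply hA

lemma tv_zero_of_forall (ν : SignedMeasure X) {E : Set X} (hE : MeasurableSet E)
    (h : ∀ A, MeasurableSet A → A ⊆ E → ν A = 0) : ν.totalVariation E = 0 := by
  set p := ν.toJordanDecomposition.posPart with hp
  set q := ν.toJordanDecomposition.negPart with hq
  have hre : p.restrict E = q.restrict E := by
    ext A hA
    rw [Measure.restrict_apply hA, Measure.restrict_apply hA]
    have h0 := h (A ∩ E) (hA.inter hE) inter_subset_right
    rw [signed_val_eq ν (hA.inter hE), sub_eq_zero] at h0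
    exact (ENNReal.toReal_eq_toReal_iff' (measure_ne_top _ _) (measure_ne_top _ _)).1 h0
  have hms : p.restrict E ⟂ₘ q.restrict E :=
    ν.toJordanDecomposition.mutuallySingular.mono Measure.restrict_le_self
      Measure.restrict_le_self
  have hq0 : q.restrict E = 0 := (Measure.MutuallySingular.self_iff _).1 (hre ▸ hms)
  have hp0 : p.restrict E = 0 := hre.trans hq0
  have hpE : p E = 0 := by rw [← Measure.restrict_apply_univ, hp0]; simp
  have hqE : q E = 0 := by rw [← Measure.restrict_apply_univ, hq0]; simp
  rw [SignedMeasure.totalVariation, Measure.add_apply, ← hp, ← hq, hpE, hqE, add_zero]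

end Helpers

/-- If `(μt)` is a disintegration of `μ` with respect to one-dimensional
Lebesgue measure, then the absolutely continuous parts `(μt t)ₐ` (with respect to
`(n-1)`-dimensional Lebesgue measure) form a disintegration of the absolutely continuous
part `μₐ` of `μ` (with respect to `n`-dimensional Lebesgue measure). -/
theorem stmt8 (n : ℕ) (μ : SignedMeasure (Fin (n + 1) → ℝ))
    (hμsupp : μ.totalVariation (unitCube (n + 1))ᶜ = 0)
    (μt : ℝ → SignedMeasure (Fin n → ℝ)) (hdis : IsDisint n μ μt)
    (g : (Fin (n + 1) → ℝ) → ℝ) (hg : IsLebDecomp μ g)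
    (gt : ℝ → (Fin n → ℝ) → ℝ) (hgt : ∀ t ∈ Set.Ioo (0 : ℝ) 1, IsLebDecomp (μt t) (gt t)) :
    IsDisint n (volume.withDensityᵥ g) (fun t => volume.withDensityᵥ (gt t)) := by
  classical
  obtain ⟨hdsupp, hdint⟩ := hdis
  obtain ⟨hgint, μs, hμs_sing, hμs_eq⟩ := hg
  set e : (Fin (n + 1) → ℝ) ≃ᵐ ℝ × (Fin n → ℝ) :=
    MeasurableEquiv.piFinSuccAbove (fun _ : Fin (n + 1) => ℝ) (Fin.last n) with he_def
  have hesymm : ∀ (t : ℝ) (y : Fin n → ℝ), e.symm (t, y) = (Fin.snoc y t : Fin (n + 1) → ℝ) := by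
    intro t y
    show (Fin.insertNthEquiv (fun _ : Fin (n + 1) => ℝ) (Fin.last n)) (t, y) = _
    simp [Fin.snocEquiv]
  have hesnoc : ∀ (t : ℝ) (y : Fin n → ℝ), e (Fin.snoc y t : Fin (n + 1) → ℝ) = (t, y) := by
    intro t y
    rw [← hesymm t y]
    exact e.apply_symm_apply (t, y)
  have hvol : MeasurePreserving e volume volume :=
    volume_preserving_piFinSuccAbove (fun _ : Fin (n + 1) => ℝ) (Fin.last n)
  have hvols : MeasurePreserving e.symm volume volume := hvol.symm
  have hsnocMeas : ∀ t : ℝ, Measurable (fun y : Fin n → ℝ => (Fin.snoc y t : Fin (n + 1) → ℝ)) := by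
    intro t
    have : (fun y : Fin n → ℝ => (Fin.snoc y t : Fin (n + 1) → ℝ)) = fun y => e.symm (t, y) :=
      funext fun y => (hesymm t y).symm
    rw [this]
    exact e.symm.measurable.comp measurable_prodMk_left
  have hcubem : MeasurableSet (unitCube (n + 1)) :=
    MeasurableSet.univ_pi fun _ => measurableSet_Ioo
  have hcubeNm : MeasurableSet (unitCube n) :=
    MeasurableSet.univ_pi fun _ => measurableSet_Ioo
  have hsnoc_mem : ∀ (t : ℝ) (y : Fin n → ℝ),
      Fin.snoc y t ∈ unitCube (n + 1) ↔ y ∈ unitCube n ∧ t ∈ Ioo (0 : ℝ) 1 := by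
    intro t y
    simp only [unitCube, mem_pi, mem_univ, true_implies]
    constructor
    · intro h
      refine ⟨fun i => ?_, by simpa [Fin.snoc_last] using h (Fin.last n)⟩
      simpa [Fin.snoc_castSucc] using h (Fin.castSucc i)
    · rintro ⟨h1, h2⟩ i
      induction i using Fin.lastCases with
      | last => simpa [Fin.snoc_last] using h2
      | cast j => simpa [Fin.snoc_castSucc] using h1 j
  have hslicem : ∀ (B : Set (Fin (n + 1) → ℝ)), MeasurableSet B → ∀ t : ℝ,
      MeasurableSet {y | Fin.snoc y t ∈ B} := by
    intro B hB t
    exact (hsnocMeas t) hB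
  -- Fubini for integrable functions
  have fub : ∀ h : (Fin (n + 1) → ℝ) → ℝ, Integrable h volume →
      Integrable (fun z : ℝ × (Fin n → ℝ) => h (Fin.snoc z.2 z.1))
        ((volume : Measure ℝ).prod volume) ∧
      ∫ x, h x = ∫ t : ℝ, ∫ y : Fin n → ℝ, h (Fin.snoc y t) := by
    intro h hh
    have heq : (fun z : ℝ × (Fin n → ℝ) => h (e.symm z))
        = fun z : ℝ × (Fin n → ℝ) => h (Fin.snoc z.2 z.1) :=
      funext fun z => congrArg h (hesymm z.1 z.2)
    have h1 : Integrable (fun z : ℝ × (Fin n → ℝ) => h (e.symm z))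
        ((volume : Measure ℝ).prod volume) := by
      have := (hvols.integrable_comp_emb e.symm.measurableEmbedding (g := h)).2 hh
      rwa [← Measure.volume_eq_prod]
    have h2 : ∫ z : ℝ × (Fin n → ℝ), h (e.symm z) ∂((volume : Measure ℝ).prod volume)
        = ∫ x, h x := by
      rw [← Measure.volume_eq_prod]
      exact hvols.integral_comp e.symm.measurableEmbedding h
    refine ⟨heq ▸ h1, ?_⟩
    rw [← h2, integral_prod _ h1]
    simp only [hesymm]
  -- Fubini over a subset of the cube
  have fubB : ∀ h : (Fin (n + 1) → ℝ) → ℝ, Integrable h volume →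
      ∀ B : Set (Fin (n + 1) → ℝ), MeasurableSet B → B ⊆ unitCube (n + 1) →
      IntegrableOn (fun t => ∫ y in {y | Fin.snoc y t ∈ B}, h (Fin.snoc y t))
        (Ioo (0 : ℝ) 1) volume ∧
      ∫ x in B, h x = ∫ t in Ioo (0 : ℝ) 1, ∫ y in {y | Fin.snoc y t ∈ B}, h (Fin.snoc y t) := by
    intro h hh B hB hBsub
    have hBi : Integrable (B.indicator h) volume := hh.indicator hB
    obtain ⟨hi, heq⟩ := fub _ hBi
    have hinner : ∀ t : ℝ, (∫ y, (B.indicator h) (Fin.snoc y t))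
        = ∫ y in {y | Fin.snoc y t ∈ B}, h (Fin.snoc y t) := by
      intro t
      rw [← integral_indicator (hslicem B hB t)]
      rfl
    have houter : Integrable (fun t : ℝ => ∫ y, (B.indicator h) (Fin.snoc y t)) volume := by
      have := hi.integral_prod_left
      exact this
    have houter' : Integrable
        (fun t : ℝ => ∫ y in {y | Fin.snoc y t ∈ B}, h (Fin.snoc y t)) volume := by
      simpa only [hinner] using houter
    have hzero : ∀ t ∉ Ioo (0 : ℝ) 1,
        (∫ y in {y | Fin.snoc y t ∈ B}, h (Fin.snoc y t)) = 0 := by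
      intro t ht
      have hempty : {y : Fin n → ℝ | Fin.snoc y t ∈ B} = ∅ := by
        ext y
        simp only [mem_setOf_eq, mem_empty_iff_false, iff_false]
        intro hmem
        exact ht ((hsnoc_mem t y).1 (hBsub hmem)).2
      rw [hempty]
      simp
    refine ⟨houter'.integrableOn, ?_⟩
    calc ∫ x in B, h x = ∫ x, B.indicator h x := (integral_indicator hB).symm
      _ = ∫ t : ℝ, ∫ y, (B.indicator h) (Fin.snoc y t) := heq
      _ = ∫ t : ℝ, ∫ y in {y | Fin.snoc y t ∈ B}, h (Fin.snoc y t) := by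
          simp only [hinner]
      _ = ∫ t in Ioo (0 : ℝ) 1, ∫ y in {y | Fin.snoc y t ∈ B}, h (Fin.snoc y t) :=
          (setIntegral_eq_integral_of_forall_compl_eq_zero fun t ht => hzero t ht).symm
  -- disintegration of the density part
  have hwd : ∀ B : Set (Fin (n + 1) → ℝ), MeasurableSet B → B ⊆ unitCube (n + 1) →
      IntegrableOn (fun t => ∫ y in {y | Fin.snoc y t ∈ B}, g (Fin.snoc y t))
        (Ioo (0 : ℝ) 1) volume ∧
      volume.withDensityᵥ g B
        = ∫ t in Ioo (0 : ℝ) 1, ∫ y in {y | Fin.snoc y t ∈ B}, g (Fin.snoc y t) := by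
    intro B hB hBsub
    obtain ⟨h1, h2⟩ := fubB g hgint B hB hBsub
    exact ⟨h1, by rw [withDensityᵥ_apply hgint hB]; exact h2⟩
  -- the singular set of μs
  obtain ⟨S, hSm, hS0, hScompl⟩ := hμs_sing
  have happμ : ∀ A : Set (Fin (n + 1) → ℝ), μ A = μs A + volume.withDensityᵥ g A := by
    intro A
    rw [hμs_eq]
    rfl
  -- g vanishes a.e. outside the cube
  have hgzero : ∀ᵐ x ∂(volume : Measure (Fin (n + 1) → ℝ)),
      x ∉ unitCube (n + 1) → g x = 0 := by
    have hset : ∀ A : Set (Fin (n + 1) → ℝ), MeasurableSet A → A ⊆ (unitCube (n + 1))ᶜ →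
        ∫ x in A, g x = 0 := by
      intro A hA hAsub
      have hAe : A =ᵐ[(volume : Measure (Fin (n + 1) → ℝ))] (A ∩ S : Set (Fin (n + 1) → ℝ)) := by
        rw [MeasureTheory.ae_eq_set]
        constructor
        · refine measure_mono_null (fun x hx => ?_) hScompl
          intro hxS
          exact hx.2 ⟨hx.1, hxS⟩
        · rw [diff_eq_empty.mpr inter_subset_left]
          exact measure_empty
      rw [setIntegral_congr_set hAe, ← withDensityᵥ_apply hgint (hA.inter hSm)]
      have h1 : μ (A ∩ S) = 0 :=
        μ.null_of_totalVariation_zero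
          (measure_mono_null (fun x hx => hAsub hx.1) hμsupp)
      have h2 : μs (A ∩ S) = 0 :=
        μs.null_of_totalVariation_zero (measure_mono_null inter_subset_right hS0)
      have := happμ (A ∩ S)
      rw [h1, h2, zero_add] at this
      exact this.symm
    have hres : g =ᵐ[volume.restrict (unitCube (n + 1))ᶜ] 0 := by
      apply ae_eq_zero_of_forall_setIntegral_eq_of_sigmaFinite
        (μ := volume.restrict (unitCube (n + 1))ᶜ)
      · intro s hs _
        exact (hgint.restrict.restrict (s := s))
      · intro s hs _
        rw [Measure.restrict_restrict hs]
        exact hset _ (hs.inter hcubem.compl) inter_subset_right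
    have hres' := (ae_restrict_iff' hcubem.compl).1 hres
    filter_upwards [hres'] with x hx hxc using hx hxc
  -- slices of S are co-null for a.e. t
  set St : ℝ → Set (Fin n → ℝ) := fun t => {y | Fin.snoc y t ∈ S} with hStdef
  have hStm : ∀ t, MeasurableSet (St t) := fun t => hslicem S hSm t
  have hNslice : ∀ᵐ t ∂(volume : Measure ℝ), volume (St t)ᶜ = 0 := by
    have hpre : MeasurableSet (e.symm ⁻¹' Sᶜ) := e.symm.measurable hSm.compl
    have hnull : (volume : Measure ℝ).prod volume (e.symm ⁻¹' Sᶜ) = 0 := by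
      rw [← Measure.volume_eq_prod, hvols.measure_preimage hSm.compl.nullMeasurableSet]
      exact hScompl
    have := (Measure.measure_prod_null hpre).1 hnull
    filter_upwards [this] with t ht
    have hset : Prod.mk t ⁻¹' (e.symm ⁻¹' Sᶜ) = (St t)ᶜ := by
      ext y
      simp only [mem_preimage, hesymm, mem_compl_iff, hStdef, mem_setOf_eq]
    rwa [hset] at ht
  -- integrability of slices of g
  have hgslice : ∀ᵐ t ∂(volume : Measure ℝ),
      Integrable (fun y : Fin n → ℝ => g (Fin.snoc y t)) volume := by
    have := (fub g hgint).1.prod_right_ae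
    filter_upwards [this] with t ht using ht
  -- slices of g vanish a.e. outside the cube
  have hgoff : ∀ᵐ t ∂(volume : Measure ℝ), ∀ᵐ y ∂(volume : Measure (Fin n → ℝ)),
      Fin.snoc y t ∉ unitCube (n + 1) → g (Fin.snoc y t) = 0 := by
    have hq : ∀ᵐ z ∂((volume : Measure ℝ).prod volume),
        e.symm z ∉ unitCube (n + 1) → g (e.symm z) = 0 := by
      rw [← Measure.volume_eq_prod]
      exact hvols.quasiMeasurePreserving.ae hgzero
    have := Measure.ae_ae_of_ae_prod hq
    filter_upwards [this] with t ht
    filter_upwards [ht] with y hy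
    rw [hesymm t y] at hy
    exact hy
  -- the countable π-system
  set C0 : Set (Set (Fin n → ℝ)) := MeasurableSpace.countableGeneratingSet (Fin n → ℝ) with hC0
  set P : Set (Set (Fin n → ℝ)) := insert univ (generatePiSystem C0) with hP
  have hPc : P.Countable :=
    (countable_generatePiSystem MeasurableSpace.countable_countableGeneratingSet).insert _
  have hPm : ∀ A ∈ P, MeasurableSet A := by
    intro A hA
    rcases hA with rfl | hA
    · exact MeasurableSet.univ
    · exact generatePiSystem_measurableSet
        (fun s hs => MeasurableSpace.measurableSet_countableGeneratingSet hs) _ hA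
  -- the W function
  set W : Set (Fin n → ℝ) → ℝ → ℝ := fun A t =>
    μt t (A ∩ St t ∩ unitCube n) - ∫ y in A ∩ St t ∩ unitCube n, g (Fin.snoc y t) with hW
  have hWzero : ∀ A : Set (Fin n → ℝ), MeasurableSet A →
      W A =ᵐ[volume.restrict (Ioo (0 : ℝ) 1)] 0 := by
    intro A hA
    have hBm : ∀ T : Set ℝ, MeasurableSet T →
        MeasurableSet (unitCube (n + 1) ∩ S ∩ e ⁻¹' (T ×ˢ A)) := fun T hT =>
      (hcubem.inter hSm).inter (e.measurable (hT.prod hA))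
    have hBsub : ∀ T : Set ℝ, (unitCube (n + 1) ∩ S ∩ e ⁻¹' (T ×ˢ A)) ⊆ unitCube (n + 1) :=
      fun T x hx => hx.1.1
    have hslice : ∀ (T : Set ℝ) (t : ℝ), t ∈ Ioo (0 : ℝ) 1 →
        {y | Fin.snoc y t ∈ unitCube (n + 1) ∩ S ∩ e ⁻¹' (T ×ˢ A)}
          = if t ∈ T then A ∩ St t ∩ unitCube n else ∅ := by
      intro T t ht
      by_cases hTt : t ∈ T
      · rw [if_pos hTt]
        ext y
        simp only [mem_setOf_eq, mem_inter_iff, mem_preimage, hesnoc, mem_prod,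
          hsnoc_mem t y, hStdef]
        constructor
        · rintro ⟨⟨⟨hy, -⟩, hyS⟩, -, hyA⟩
          exact ⟨⟨hyA, hyS⟩, hy⟩
        · rintro ⟨⟨hyA, hyS⟩, hy⟩
          exact ⟨⟨⟨hy, ht⟩, hyS⟩, hTt, hyA⟩
      · rw [if_neg hTt]
        ext y
        simp only [mem_setOf_eq, mem_inter_iff, mem_preimage, hesnoc, mem_prod,
          mem_empty_iff_false, iff_false]
        rintro ⟨-, hTt', -⟩
        exact hTt hTt'
    have hkeyT : ∀ T : Set ℝ, MeasurableSet T →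
        ∫ t in Ioo (0 : ℝ) 1, T.indicator (W A) t = 0 := by
      intro T hT
      obtain ⟨hI1, hE1⟩ := hdint _ (hBm T hT) (hBsub T)
      obtain ⟨hI2, hE2⟩ := hwd _ (hBm T hT) (hBsub T)
      have hμsB : μs (unitCube (n + 1) ∩ S ∩ e ⁻¹' (T ×ˢ A)) = 0 :=
        μs.null_of_totalVariation_zero
          (measure_mono_null (fun x hx => hx.1.2) hS0)
      have hdiff : μ (unitCube (n + 1) ∩ S ∩ e ⁻¹' (T ×ˢ A))
          - volume.withDensityᵥ g (unitCube (n + 1) ∩ S ∩ e ⁻¹' (T ×ˢ A)) = 0 := by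
        rw [happμ, hμsB, zero_add, sub_self]
      have h0 : ∫ t in Ioo (0 : ℝ) 1,
          (μt t {y | Fin.snoc y t ∈ unitCube (n + 1) ∩ S ∩ e ⁻¹' (T ×ˢ A)}
            - ∫ y in {y | Fin.snoc y t ∈ unitCube (n + 1) ∩ S ∩ e ⁻¹' (T ×ˢ A)},
                g (Fin.snoc y t)) = 0 := by
        rw [integral_sub hI1 hI2, ← hE1, ← hE2]
        exact hdiff
      refine (setIntegral_congr_fun measurableSet_Ioo fun t ht => ?_).trans h0
      rw [indicator_apply, hslice T t ht]
      by_cases hTt : t ∈ T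
      · rw [if_pos hTt, if_pos hTt]
      · rw [if_neg hTt, if_neg hTt]
        simp
    have hWint : IntegrableOn (W A) (Ioo (0 : ℝ) 1) volume := by
      obtain ⟨hI1, -⟩ := hdint _ (hBm univ MeasurableSet.univ) (hBsub univ)
      obtain ⟨hI2, -⟩ := hwd _ (hBm univ MeasurableSet.univ) (hBsub univ)
      refine IntegrableOn.congr_fun (hI1.sub hI2) (fun t ht => ?_) measurableSet_Ioo
      simp only [Pi.sub_apply, hW]
      rw [hslice univ t ht, if_pos (mem_univ t)]
    apply ae_eq_zero_of_forall_setIntegral_eq_of_sigmaFinite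
      (μ := volume.restrict (Ioo (0 : ℝ) 1))
    · intro s hs _
      rw [IntegrableOn, Measure.restrict_restrict hs]
      exact hWint.mono_set inter_subset_right
    · intro s hs _
      calc ∫ t in s, W A t ∂(volume.restrict (Ioo (0 : ℝ) 1))
          = ∫ t, s.indicator (W A) t ∂(volume.restrict (Ioo (0 : ℝ) 1)) :=
            (integral_indicator hs).symm
        _ = 0 := hkeyT s hs
  -- a.e. equality of fiber densities
  have hae : ∀ᵐ t ∂volume.restrict (Ioo (0 : ℝ) 1), ∀ A ∈ P, W A t = 0 := by
    rw [MeasureTheory.ae_ball_iff hPc]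
    intro A hA
    filter_upwards [hWzero A (hPm A hA)] with t ht using ht
  have hkey : ∀ᵐ t ∂volume.restrict (Ioo (0 : ℝ) 1),
      volume.withDensityᵥ (gt t) = volume.withDensityᵥ (fun y => g (Fin.snoc y t)) := by
    filter_upwards [hae, ae_restrict_of_ae hNslice, ae_restrict_of_ae hgslice,
      ae_restrict_of_ae hgoff, ae_restrict_mem measurableSet_Ioo] with t hWA hN hInt hOff ht
    obtain ⟨hgti, μts, hts_sing, hts_eq⟩ := hgt t ht
    set ν0 : SignedMeasure (Fin n → ℝ) :=
      μt t - volume.withDensityᵥ (fun y => g (Fin.snoc y t)) with hν0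
    have hν0app : ∀ A : Set (Fin n → ℝ), MeasurableSet A →
        ν0 A = μt t A - ∫ y in A, g (Fin.snoc y t) := by
      intro A hA
      rw [hν0, VectorMeasure.sub_apply, withDensityᵥ_apply hInt hA]
    have hoff0 : ∀ A : Set (Fin n → ℝ), MeasurableSet A → A ⊆ (unitCube n)ᶜ → ν0 A = 0 := by
      intro A hA hAsub
      have h1μ : μt t A = 0 :=
        (μt t).null_of_totalVariation_zero (measure_mono_null hAsub (hdsupp t ht))
      have h2 : ∀ᵐ y ∂(volume : Measure (Fin n → ℝ)).restrict A, g (Fin.snoc y t) = 0 := by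
        filter_upwards [ae_restrict_of_ae hOff, ae_restrict_mem hA] with y hy1 hy2
        refine hy1 fun hc => ?_
        exact hAsub hy2 ((hsnoc_mem t y).1 hc).1
      rw [hν0app A hA, h1μ, integral_eq_zero_of_ae h2, sub_zero]
    set Et : Set (Fin n → ℝ) := St t ∩ unitCube n with hEt
    have hEtm : MeasurableSet Et := (hStm t).inter hcubeNm
    have hν0AE : ∀ A ∈ P, ν0 (A ∩ Et) = 0 := by
      intro A hA
      have hW0 : W A t = 0 := hWA A hA
      have hset : A ∩ Et = A ∩ St t ∩ unitCube n := by rw [hEt, inter_assoc]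
      rw [hν0app _ ((hPm A hA).inter hEtm), hset]
      exact hW0
    have hre : ν0.toJordanDecomposition.posPart.restrict Et
        = ν0.toJordanDecomposition.negPart.restrict Et := by
      refine ext_of_generate_finite (generatePiSystem C0)
        ?_ (isPiSystem_generatePiSystem C0) ?_ ?_
      · exact (generateFrom_generatePiSystem_eq.trans
          MeasurableSpace.generateFrom_countableGeneratingSet).symm
      · intro A hA
        have hAm := hPm A (mem_insert_of_mem _ hA)
        have h0 := hν0AE A (mem_insert_of_mem _ hA)
        rw [Measure.restrict_apply hAm, Measure.restrict_apply hAm]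
        rw [signed_val_eq ν0 (hAm.inter hEtm), sub_eq_zero] at h0
        exact (ENNReal.toReal_eq_toReal_iff' (measure_ne_top _ _) (measure_ne_top _ _)).1 h0
      · have h0 := hν0AE univ (mem_insert _ _)
        rw [Measure.restrict_apply_univ, Measure.restrict_apply_univ]
        rw [univ_inter] at h0
        rw [signed_val_eq ν0 hEtm, sub_eq_zero] at h0
        exact (ENNReal.toReal_eq_toReal_iff' (measure_ne_top _ _) (measure_ne_top _ _)).1 h0
    have hms : ν0.toJordanDecomposition.posPart.restrict Et
        ⟂ₘ ν0.toJordanDecomposition.negPart.restrict Et :=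
      ν0.toJordanDecomposition.mutuallySingular.mono Measure.restrict_le_self
        Measure.restrict_le_self
    have hq0 : ν0.toJordanDecomposition.negPart.restrict Et = 0 :=
      (Measure.MutuallySingular.self_iff _).1 (hre ▸ hms)
    have hp0 : ν0.toJordanDecomposition.posPart.restrict Et = 0 := hre.trans hq0
    have htvEt : ν0.totalVariation Et = 0 := by
      have h1 : ν0.toJordanDecomposition.posPart Et = 0 := by
        rw [← Measure.restrict_apply_univ, hp0]; simp
      have h2 : ν0.toJordanDecomposition.negPart Et = 0 := by
        rw [← Measure.restrict_apply_univ, hq0]; simp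
      rw [SignedMeasure.totalVariation, Measure.add_apply, h1, h2, add_zero]
    have htvoff : ν0.totalVariation (unitCube n)ᶜ = 0 :=
      tv_zero_of_forall ν0 hcubeNm.compl hoff0
    have htvS : ν0.totalVariation (St t) = 0 := by
      have hsub : St t ⊆ Et ∪ (unitCube n)ᶜ := by
        intro y hy
        by_cases hyc : y ∈ unitCube n
        · exact Or.inl ⟨hy, hyc⟩
        · exact Or.inr hyc
      exact measure_mono_null hsub (measure_union_null htvEt htvoff)
    have hsing : ν0 ⟂ᵥ (volume : Measure (Fin n → ℝ)).toENNRealVectorMeasure := by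
      rw [SignedMeasure.mutuallySingular_ennreal_iff,
        VectorMeasure.ennrealToMeasure_toENNRealVectorMeasure]
      exact ⟨St t, hStm t, htvS, hN⟩
    have hts_singv : μts ⟂ᵥ (volume : Measure (Fin n → ℝ)).toENNRealVectorMeasure := by
      rw [SignedMeasure.mutuallySingular_ennreal_iff,
        VectorMeasure.ennrealToMeasure_toENNRealVectorMeasure]
      exact hts_sing
    have hadd1 : μt t = ν0 + volume.withDensityᵥ (fun y => g (Fin.snoc y t)) := by
      rw [hν0, sub_add_cancel]
    have e1 := SignedMeasure.eq_rnDeriv ν0 _ hInt hsing hadd1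
    have e2 := SignedMeasure.eq_rnDeriv μts (gt t) hgti hts_singv hts_eq
    exact WithDensityᵥEq.congr_ae (e2.trans e1.symm)
  -- conclusion
  constructor
  · intro t ht
    obtain ⟨hgti, μts, hts_sing, hts_eq⟩ := hgt t ht
    obtain ⟨u, hu, hu1, hu2⟩ := hts_sing
    refine tv_zero_of_forall _ hcubeNm.compl fun A hA hAsub => ?_
    rw [withDensityᵥ_apply hgti hA]
    have hAe : A =ᵐ[(volume : Measure (Fin n → ℝ))] (A ∩ u : Set (Fin n → ℝ)) := by
      rw [MeasureTheory.ae_eq_set]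
      constructor
      · refine measure_mono_null (fun x hx => ?_) hu2
        intro hxS
        exact hx.2 ⟨hx.1, hxS⟩
      · rw [diff_eq_empty.mpr inter_subset_left]
        exact measure_empty
    rw [setIntegral_congr_set hAe, ← withDensityᵥ_apply hgti (hA.inter hu)]
    have h1 : μt t (A ∩ u) = 0 :=
      (μt t).null_of_totalVariation_zero
        (measure_mono_null (fun x hx => hAsub hx.1) (hdsupp t ht))
    have h2 : μts (A ∩ u) = 0 :=
      μts.null_of_totalVariation_zero (measure_mono_null inter_subset_right hu1)
    have happt : μt t (A ∩ u) = μts (A ∩ u) + volume.withDensityᵥ (gt t) (A ∩ u) := by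
      rw [hts_eq]; rfl
    rw [h1, h2, zero_add] at happt
    exact happt.symm
  · intro B hB hBsub
    obtain ⟨hFi, hFeq⟩ := hwd B hB hBsub
    have haeB : (fun t => volume.withDensityᵥ (gt t) {y | Fin.snoc y t ∈ B})
        =ᵐ[volume.restrict (Ioo (0 : ℝ) 1)]
        (fun t => ∫ y in {y | Fin.snoc y t ∈ B}, g (Fin.snoc y t)) := by
      filter_upwards [hkey, ae_restrict_of_ae hgslice] with t hk hInt
      rw [hk, withDensityᵥ_apply hInt (hslicem B hB t)]
    exact ⟨hFi.congr haeB.symm, by rw [hFeq]; exact (integral_congr_ae haeB).symm⟩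
end

section
/- For j ∈ ℕ ∪ {∞}, let u_j, v_j : [0,2π] → ℝ be continuous functions with Var(v_j;[0,2π]) < ∞, and let μ_j be the unique finite signed Borel measure on (0,2π] satisfying μ_j((a,b]) = v_j(b) − v_j(a) for all 0 ≤ a ≤ b ≤ 2π. Assume that ∫₀^{2π} |u_j − u_∞| dt → 0, Var(u_j − u_∞; [0,2π]) → 0, ∫₀^{2π} |v_j − v_∞| dt → 0 and Var(v_j − v_∞; [0,2π]) → 0 as j → ∞. Then ∫_{(0,2π]} u_j dμ_j → ∫_{(0,2π]} u_∞ dμ_∞. -/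
open MeasureTheory Set Filter Topology

/-- Integral of a function against a finite signed measure, via the Jordan decomposition. -/
noncomputable def sInt {X : Type*} [MeasurableSpace X] (μ : SignedMeasure X) (f : X → ℝ) : ℝ :=
  (∫ x, f x ∂μ.toJordanDecomposition.posPart) - ∫ x, f x ∂μ.toJordanDecomposition.negPart

/-!
Write `∫ u_j dμ_j - ∫ u_∞ dμ_∞ = ∫ (u_j - u_∞) dμ_j + ∫ u_∞ d(μ_j - μ_∞)`. A function on `[a, b]`
is bounded by its mean absolute value plus its variation, so `u_j - u_∞ → 0` uniformly. The total
variation of the Stieltjes measure of a continuous `w` is at most `Var w`: with `φ` the variation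
function of `w`, the measure is the difference of the Stieltjes measures of `(φ + w) / 2` and
`(φ - w) / 2`, whose masses add up to `Var w`. Hence `‖μ_j - μ_∞‖ ≤ Var (v_j - v_∞) → 0` while
`‖μ_j‖` stays bounded, and both terms tend to `0`.
-/

lemma StieltjesFunction.measure_univ_le (f : StieltjesFunction ℝ) {C : ℝ}
    (h : ∀ x y, f y - f x ≤ C) : f.measure univ ≤ ENNReal.ofReal C := by
  have hunion : ⋃ n : ℕ, Ioc (-(n : ℝ)) n = univ := by
    refine eq_univ_of_forall fun x => mem_iUnion.2 ?_
    obtain ⟨n, hn⟩ := exists_nat_gt |x|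
    exact ⟨n, by linarith [neg_abs_le x], by linarith [le_abs_self x]⟩
  have hmono : Monotone fun n : ℕ => Ioc (-(n : ℝ)) n := fun m n hmn =>
    Ioc_subset_Ioc (by simpa using hmn) (by simpa using hmn)
  rw [← hunion, hmono.measure_iUnion]
  exact iSup_le fun n => by
    rw [f.measure_Ioc]
    exact ENNReal.ofReal_le_ofReal (h _ _)

lemma Ioc_inter_Ioc_eq_Ioc_projIcc {a b : ℝ} (h : a ≤ b) (x y : ℝ) :
    Ioc x y ∩ Ioc a b = Ioc (projIcc a b h x : ℝ) (projIcc a b h y) := by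
  ext t
  simp only [mem_inter_iff, mem_Ioc, coe_projIcc]
  grind

lemma abs_le_integral_abs_div_add_eVariationOn {h : ℝ → ℝ} {a b : ℝ} (hab : a < b)
    (hi : IntegrableOn h (Icc a b)) (hfin : eVariationOn h (Icc a b) ≠ ⊤) {x : ℝ}
    (hx : x ∈ Icc a b) :
    |h x| ≤ (∫ t in Icc a b, |h t|) / (b - a) + (eVariationOn h (Icc a b)).toReal := by
  set V := (eVariationOn h (Icc a b)).toReal
  have hpt : ∀ y ∈ Icc a b, |h x| - V ≤ |h y| := fun y hy => by
    have hdist := ENNReal.toReal_mono hfin (eVariationOn.edist_le h hx hy)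
    rw [edist_dist, ENNReal.toReal_ofReal dist_nonneg, Real.dist_eq] at hdist
    linarith [abs_sub_abs_le_abs_sub (h x) (h y)]
  have hint := setIntegral_mono_on (integrableOn_const (by simp)) hi.abs measurableSet_Icc hpt
  rw [setIntegral_const, Real.volume_real_Icc_of_le hab.le, smul_eq_mul] at hint
  rw [div_add' _ _ _ (sub_pos.2 hab).ne', le_div_iff₀ (sub_pos.2 hab)]
  linarith

namespace MeasureTheory.SignedMeasure

variable {X : Type*} [MeasurableSpace X]

lemma totalVariation_sub_le (s t : SignedMeasure X) :
    (s - t).totalVariation ≤ s.totalVariation + t.totalVariation := by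
  simpa only [totalVariation_eq_variation] using VectorMeasure.variation_sub_le

lemma eq_toSignedMeasure_sub (s : SignedMeasure X) :
    s = s.toJordanDecomposition.posPart.toSignedMeasure
      - s.toJordanDecomposition.negPart.toSignedMeasure :=
  s.toSignedMeasure_toJordanDecomposition.symm

lemma posPart_le_totalVariation (s : SignedMeasure X) :
    s.toJordanDecomposition.posPart ≤ s.totalVariation :=
  Measure.le_add_right le_rfl

lemma negPart_le_totalVariation (s : SignedMeasure X) :
    s.toJordanDecomposition.negPart ≤ s.totalVariation :=
  Measure.le_add_left le_rfl

lemma posPart_add_eq_negPart_add {s : SignedMeasure X} {μ ν : Measure X}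
    [IsFiniteMeasure μ] [IsFiniteMeasure ν]
    (h : s = μ.toSignedMeasure - ν.toSignedMeasure) :
    s.toJordanDecomposition.posPart + ν = s.toJordanDecomposition.negPart + μ := by
  ext A hA
  have hJ := s.apply_eq_posPart_real_sub_negPart_real hA
  have hμν : s A = μ.real A - ν.real A := by
    rw [h, sub_apply, Measure.toSignedMeasure_apply_measurable hA,
      Measure.toSignedMeasure_apply_measurable hA]
  rw [← ENNReal.toReal_eq_toReal_iff' (by finiteness) (by finiteness)]
  simp only [Measure.add_apply, ENNReal.toReal_add (measure_ne_top _ _) (measure_ne_top _ _),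
    ← measureReal_def]
  linarith

lemma totalVariation_le_add_sub (s t : SignedMeasure X) :
    s.totalVariation ≤ t.totalVariation + (s - t).totalVariation := by
  simpa only [totalVariation_eq_variation, add_sub_cancel] using
    VectorMeasure.variation_add_le (μ := t) (ν := s - t)

lemma ext_of_Ioc {s t : SignedMeasure ℝ} (h : ∀ a b, a < b → s (Ioc a b) = t (Ioc a b)) :
    s = t := by
  have hmeas : s.toJordanDecomposition.posPart + t.toJordanDecomposition.negPart
      = s.toJordanDecomposition.negPart + t.toJordanDecomposition.posPart := by
    refine Measure.ext_of_Ioc _ _ fun a b hab => ?_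
    have hs := s.apply_eq_posPart_real_sub_negPart_real (measurableSet_Ioc (a := a) (b := b))
    have ht := t.apply_eq_posPart_real_sub_negPart_real (measurableSet_Ioc (a := a) (b := b))
    rw [← ENNReal.toReal_eq_toReal_iff' (by finiteness) (by finiteness)]
    simp only [Measure.add_apply, ENNReal.toReal_add (measure_ne_top _ _) (measure_ne_top _ _),
      ← measureReal_def]
    linarith [h a b hab]
  have hsigned : (s.toJordanDecomposition.posPart
      + t.toJordanDecomposition.negPart).toSignedMeasure
      = (s.toJordanDecomposition.negPart + t.toJordanDecomposition.posPart).toSignedMeasure := by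
    simp only [hmeas]
  rw [Measure.toSignedMeasure_add, Measure.toSignedMeasure_add] at hsigned
  rw [s.eq_toSignedMeasure_sub, t.eq_toSignedMeasure_sub, sub_eq_sub_iff_add_eq_add,
    add_comm t.toJordanDecomposition.posPart.toSignedMeasure]
  exact hsigned

lemma totalVariation_univ_le_of_apply_Ioc {s : SignedMeasure ℝ} {W : ℝ → ℝ}
    (hW : BoundedVariationOn W univ) (hc : Continuous W)
    (hs : ∀ x y, x < y → s (Ioc x y) = W y - W x) :
    s.totalVariation univ ≤ eVariationOn W univ := by
  set φ := variationOnFromTo W univ 0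
  have hφ : ∀ x, ContinuousWithinAt φ (Ici x) x := fun x =>
    hW.continuousWithinAt_variationOnFromTo_Ici hc.continuousWithinAt
  let P : StieltjesFunction ℝ :=
    { toFun := fun x => (φ x + W x) / 2
      mono' := (monotoneOn_univ.1 (variationOnFromTo.add_self_monotoneOn
        hW.locallyBoundedVariationOn (mem_univ 0))).div_const zero_le_two
      right_continuous' := fun x => ((hφ x).add hc.continuousWithinAt).div_const 2 }
  let Q : StieltjesFunction ℝ :=
    { toFun := fun x => (φ x - W x) / 2
      mono' := (monotoneOn_univ.1 (variationOnFromTo.sub_self_monotoneOn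
        hW.locallyBoundedVariationOn (mem_univ 0))).div_const zero_le_two
      right_continuous' := fun x => ((hφ x).sub hc.continuousWithinAt).div_const 2 }
  have hPQ : ∀ x y, (P + Q) y - (P + Q) x ≤ (eVariationOn W univ).toReal := by
    intro x y
    have hxy := variationOnFromTo.add hW.locallyBoundedVariationOn (mem_univ 0) (mem_univ x)
      (mem_univ y)
    have hbound := variationOnFromTo.abs_le_eVariationOn hW (a := x) (b := y)
    simp only [StieltjesFunction.add_apply, P, Q]
    linarith [le_abs_self (variationOnFromTo W univ x y)]
  have hmass : P.measure univ + Q.measure univ ≤ eVariationOn W univ := by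
    rw [← Measure.add_apply, ← StieltjesFunction.measure_add]
    exact ((P + Q).measure_univ_le hPQ).trans ENNReal.ofReal_toReal_le
  have : IsFiniteMeasure P.measure := ⟨(le_self_add.trans hmass).trans_lt hW.lt_top⟩
  have : IsFiniteMeasure Q.measure := ⟨(le_add_self.trans hmass).trans_lt hW.lt_top⟩
  have hsPQ : s = P.measure.toSignedMeasure - Q.measure.toSignedMeasure := by
    refine ext_of_Ioc fun x y hxy => ?_
    rw [hs x y hxy, sub_apply, Measure.toSignedMeasure_apply_measurable measurableSet_Ioc,
      Measure.toSignedMeasure_apply_measurable measurableSet_Ioc, measureReal_def,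
      measureReal_def, P.measure_Ioc, Q.measure_Ioc,
      ENNReal.toReal_ofReal (sub_nonneg.2 (P.mono hxy.le)),
      ENNReal.toReal_ofReal (sub_nonneg.2 (Q.mono hxy.le))]
    simp only [P, Q]
    ring
  calc s.totalVariation univ
      ≤ P.measure univ + Q.measure univ := by
        rw [totalVariation_eq_variation, hsPQ]
        simpa using Measure.le_iff'.1
          (VectorMeasure.variation_sub_le (μ := P.measure.toSignedMeasure)
            (ν := Q.measure.toSignedMeasure)) univ
    _ ≤ eVariationOn W univ := hmass

structure IsStieltjesOn (s : SignedMeasure ℝ) (w : ℝ → ℝ) (a b : ℝ) : Prop where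
  totalVariation_compl : s.totalVariation (Ioc a b)ᶜ = 0
  apply_Ioc : ∀ x y, a ≤ x → x ≤ y → y ≤ b → s (Ioc x y) = w y - w x

namespace IsStieltjesOn

variable {s t : SignedMeasure ℝ} {w w' : ℝ → ℝ} {a b : ℝ}

lemma ae_mem (hs : s.IsStieltjesOn w a b) : ∀ᵐ x ∂s.totalVariation, x ∈ Ioc a b :=
  measure_eq_zero_iff_ae_notMem.1 hs.totalVariation_compl |>.mono fun _ hx => by simpa using hx

lemma integrable (hs : s.IsStieltjesOn w a b) {f : ℝ → ℝ} (hf : ContinuousOn f (Icc a b)) :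
    Integrable f s.totalVariation := by
  have hrestrict : s.totalVariation.restrict (Icc a b) = s.totalVariation :=
    Measure.restrict_eq_self_of_ae_mem (hs.ae_mem.mono fun _ hx => Ioc_subset_Icc_self hx)
  simpa [IntegrableOn, hrestrict] using
    hf.integrableOn_compact (μ := s.totalVariation) isCompact_Icc

lemma sub (hs : s.IsStieltjesOn w a b) (ht : t.IsStieltjesOn w' a b) :
    (s - t).IsStieltjesOn (fun x => w x - w' x) a b where
  totalVariation_compl := by
    refine le_antisymm ?_ zero_le
    calc (s - t).totalVariation (Ioc a b)ᶜ
        ≤ s.totalVariation (Ioc a b)ᶜ + t.totalVariation (Ioc a b)ᶜ :=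
          Measure.le_iff'.1 (totalVariation_sub_le s t) _
      _ = 0 := by rw [hs.totalVariation_compl, ht.totalVariation_compl, add_zero]
  apply_Ioc x y hx hxy hy := by
    rw [sub_apply, hs.apply_Ioc x y hx hxy hy, ht.apply_Ioc x y hx hxy hy]
    ring

lemma apply_Ioc_eq_projIcc (hs : s.IsStieltjesOn w a b) (hab : a ≤ b) {x y : ℝ}
    (hxy : x ≤ y) :
    s (Ioc x y) = w (projIcc a b hab y) - w (projIcc a b hab x) := by
  have hnull : s (Ioc x y \ Ioc a b) = 0 :=
    s.null_of_totalVariation_zero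
      (measure_mono_null (sdiff_subset_compl _ _) hs.totalVariation_compl)
  rw [← inter_union_sdiff (Ioc x y) (Ioc a b),
    VectorMeasure.of_union disjoint_sdiff_inter.symm (measurableSet_Ioc.inter measurableSet_Ioc)
      (measurableSet_Ioc.diff measurableSet_Ioc), hnull, add_zero,
    Ioc_inter_Ioc_eq_Ioc_projIcc hab]
  exact hs.apply_Ioc _ _ (projIcc a b hab x).2.1 (monotone_projIcc hab hxy)
    (projIcc a b hab y).2.2

lemma totalVariation_univ_le (hs : s.IsStieltjesOn w a b) (hab : a ≤ b)
    (hw : ContinuousOn w (Icc a b)) : s.totalVariation univ ≤ eVariationOn w (Icc a b) := by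
  rcases eq_or_ne (eVariationOn w (Icc a b)) ⊤ with htop | hfin
  · simp [htop]
  set p : ℝ → ℝ := fun x => projIcc a b hab x
  have hvar : eVariationOn (w ∘ p) univ = eVariationOn w (Icc a b) := by
    rw [eVariationOn.comp_eq_of_monotoneOn w p
      (((Subtype.mono_coe _).comp (monotone_projIcc hab)).monotoneOn univ), image_univ,
      show p = Subtype.val ∘ projIcc a b hab from rfl, range_comp,
      range_projIcc, image_univ, Subtype.range_coe]
  refine (totalVariation_univ_le_of_apply_Ioc (W := w ∘ p) (by rwa [BoundedVariationOn, hvar])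
    (hw.comp_continuous (continuous_subtype_val.comp continuous_projIcc)
      fun x => (projIcc a b hab x).2) fun x y hxy => ?_).trans hvar.le
  exact hs.apply_Ioc_eq_projIcc hab hxy.le

end IsStieltjesOn

end MeasureTheory.SignedMeasure

open SignedMeasure

section

variable {X : Type*} [MeasurableSpace X]

lemma sInt_eq_integral_sub_integral {s : SignedMeasure X} {μ ν : Measure X}
    [IsFiniteMeasure μ] [IsFiniteMeasure ν] (h : s = μ.toSignedMeasure - ν.toSignedMeasure)
    {f : X → ℝ} (hs : Integrable f s.totalVariation) (hμ : Integrable f μ)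
    (hν : Integrable f ν) :
    sInt s f = ∫ x, f x ∂μ - ∫ x, f x ∂ν := by
  have key := congrArg (fun ρ => ∫ x, f x ∂ρ) (posPart_add_eq_negPart_add h)
  rw [integral_add_measure (hs.mono_measure s.posPart_le_totalVariation) hν,
    integral_add_measure (hs.mono_measure s.negPart_le_totalVariation) hμ] at key
  rw [sInt]
  linarith

lemma sInt_sub_measure {s t : SignedMeasure X} {f : X → ℝ}
    (hs : Integrable f s.totalVariation) (ht : Integrable f t.totalVariation) :
    sInt (s - t) f = sInt s f - sInt t f := by
  set sP := s.toJordanDecomposition.posPart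
  set sN := s.toJordanDecomposition.negPart
  set tP := t.toJordanDecomposition.posPart
  set tN := t.toJordanDecomposition.negPart
  have hsub : s - t = (sP + tN).toSignedMeasure - (sN + tP).toSignedMeasure := by
    conv_lhs => rw [s.eq_toSignedMeasure_sub, t.eq_toSignedMeasure_sub]
    simp only [Measure.toSignedMeasure_add]
    abel
  have hsP := hs.mono_measure s.posPart_le_totalVariation
  have hsN := hs.mono_measure s.negPart_le_totalVariation
  have htP := ht.mono_measure t.posPart_le_totalVariation
  have htN := ht.mono_measure t.negPart_le_totalVariation
  rw [sInt_eq_integral_sub_integral hsub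
      ((hs.add_measure ht).mono_measure (totalVariation_sub_le s t))
      (hsP.add_measure htN) (hsN.add_measure htP),
    integral_add_measure hsP htN, integral_add_measure hsN htP, sInt, sInt]
  ring

lemma sInt_sub {s : SignedMeasure X} {f g : X → ℝ}
    (hf : Integrable f s.totalVariation) (hg : Integrable g s.totalVariation) :
    sInt s (f - g) = sInt s f - sInt s g := by
  simp only [sInt, Pi.sub_apply, integral_sub (hf.mono_measure s.posPart_le_totalVariation)
      (hg.mono_measure s.posPart_le_totalVariation),
    integral_sub (hf.mono_measure s.negPart_le_totalVariation)
      (hg.mono_measure s.negPart_le_totalVariation)]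
  ring

lemma abs_sInt_le {s : SignedMeasure X} {f : X → ℝ} {C : ℝ}
    (h : ∀ᵐ x ∂s.totalVariation, |f x| ≤ C) :
    |sInt s f| ≤ C * s.totalVariation.real univ := by
  simp_rw [← Real.norm_eq_abs] at h
  have hpos := norm_integral_le_of_norm_le_const (ae_mono s.posPart_le_totalVariation h)
  have hneg := norm_integral_le_of_norm_le_const (ae_mono s.negPart_le_totalVariation h)
  have htv : s.totalVariation.real univ = s.toJordanDecomposition.posPart.real univ
      + s.toJordanDecomposition.negPart.real univ := measureReal_add_apply
  rw [htv, mul_add]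
  exact (abs_sub _ _).trans (add_le_add hpos hneg)

lemma abs_sInt_sub_sInt_le {s t : SignedMeasure X} {f g : X → ℝ} {ε C : ℝ}
    (hf : Integrable f s.totalVariation) (hgs : Integrable g s.totalVariation)
    (hgt : Integrable g t.totalVariation)
    (hfg : ∀ᵐ x ∂s.totalVariation, |f x - g x| ≤ ε)
    (hg : ∀ᵐ x ∂(s - t).totalVariation, |g x| ≤ C) :
    |sInt s f - sInt t g|
      ≤ ε * s.totalVariation.real univ + C * (s - t).totalVariation.real univ := by
  have hsplit : sInt s f - sInt t g = sInt s (f - g) + sInt (s - t) g := by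
    rw [sInt_sub hf hgs, sInt_sub_measure hgs hgt]
    ring
  rw [hsplit]
  exact (abs_add_le _ _).trans (add_le_add (abs_sInt_le hfg) (abs_sInt_le hg))

end

lemma abs_sInt_sub_sInt_le_of_isStieltjesOn {s t : SignedMeasure ℝ} {u u' w w' : ℝ → ℝ}
    {a b C : ℝ} (hab : a < b) (hs : s.IsStieltjesOn w a b) (ht : t.IsStieltjesOn w' a b)
    (hu : ContinuousOn u (Icc a b)) (hu' : ContinuousOn u' (Icc a b))
    (hw : ContinuousOn w (Icc a b)) (hw' : ContinuousOn w' (Icc a b))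
    (hC : ∀ x ∈ Icc a b, |u' x| ≤ C)
    (huVar : eVariationOn (fun x => u x - u' x) (Icc a b) ≠ ⊤)
    (hwVar : eVariationOn (fun x => w x - w' x) (Icc a b) ≠ ⊤) :
    |sInt s u - sInt t u'|
      ≤ ((∫ x in Icc a b, |u x - u' x|) / (b - a)
          + (eVariationOn (fun x => u x - u' x) (Icc a b)).toReal)
        * (t.totalVariation.real univ + (eVariationOn (fun x => w x - w' x) (Icc a b)).toReal)
        + C * (eVariationOn (fun x => w x - w' x) (Icc a b)).toReal := by
  have hst := hs.sub ht
  have hst_mass : (s - t).totalVariation.real univ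
      ≤ (eVariationOn (fun x => w x - w' x) (Icc a b)).toReal :=
    ENNReal.toReal_mono hwVar (hst.totalVariation_univ_le hab.le (hw.sub hw'))
  have hs_mass : s.totalVariation.real univ ≤ t.totalVariation.real univ
      + (eVariationOn (fun x => w x - w' x) (Icc a b)).toReal := by
    have := ENNReal.toReal_mono (measure_ne_top _ _)
      (Measure.le_iff'.1 (totalVariation_le_add_sub s t) univ)
    rw [← measureReal_def, ← measureReal_def, measureReal_add_apply] at this
    linarith
  have hε : 0 ≤ (∫ x in Icc a b, |u x - u' x|) / (b - a)
      + (eVariationOn (fun x => u x - u' x) (Icc a b)).toReal := by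
    have := sub_pos.2 hab
    positivity
  have hC0 : 0 ≤ C := (abs_nonneg _).trans (hC a (left_mem_Icc.2 hab.le))
  refine (abs_sInt_sub_sInt_le (hs.integrable hu) (hs.integrable hu') (ht.integrable hu')
    (hs.ae_mem.mono fun x hx => ?_)
    (hst.ae_mem.mono fun x hx => hC x (Ioc_subset_Icc_self hx))).trans (by gcongr)
  exact abs_le_integral_abs_div_add_eVariationOn (h := fun x => u x - u' x) hab
    (hu.sub hu').integrableOn_Icc huVar (Ioc_subset_Icc_self hx)

theorem stmt13_general (u v : ℕ → ℝ → ℝ) (uinf vinf : ℝ → ℝ)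
    (hu : ∀ j, ContinuousOn (u j) (Set.Icc 0 (2 * Real.pi)))
    (hv : ∀ j, ContinuousOn (v j) (Set.Icc 0 (2 * Real.pi)))
    (huinf : ContinuousOn uinf (Set.Icc 0 (2 * Real.pi)))
    (hvinf : ContinuousOn vinf (Set.Icc 0 (2 * Real.pi)))
    (μ : ℕ → SignedMeasure ℝ) (μinf : SignedMeasure ℝ)
    (hμsupp : ∀ j, (μ j).totalVariation (Set.Ioc 0 (2 * Real.pi))ᶜ = 0)
    (hμinfsupp : μinf.totalVariation (Set.Ioc 0 (2 * Real.pi))ᶜ = 0)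
    (hμ : ∀ j, ∀ a b : ℝ, 0 ≤ a → a ≤ b → b ≤ 2 * Real.pi →
      μ j (Set.Ioc a b) = v j b - v j a)
    (hμinf : ∀ a b : ℝ, 0 ≤ a → a ≤ b → b ≤ 2 * Real.pi →
      μinf (Set.Ioc a b) = vinf b - vinf a)
    (huL1 : Tendsto (fun j => ∫ t in Set.Icc 0 (2 * Real.pi), |u j t - uinf t|)
      atTop (𝓝 0))
    (huVar : Tendsto (fun j => eVariationOn (fun t => u j t - uinf t)
      (Set.Icc 0 (2 * Real.pi))) atTop (𝓝 0))
    (hvVar : Tendsto (fun j => eVariationOn (fun t => v j t - vinf t)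
      (Set.Icc 0 (2 * Real.pi))) atTop (𝓝 0)) :
    Tendsto (fun j => sInt (μ j) (u j)) atTop (𝓝 (sInt μinf uinf)) := by
  have hπ : (0 : ℝ) < 2 * Real.pi := by positivity
  obtain ⟨C, hC⟩ := isCompact_Icc.exists_bound_of_continuousOn huinf
  set ε : ℕ → ℝ := fun j => (∫ t in Icc 0 (2 * Real.pi), |u j t - uinf t|) / (2 * Real.pi)
    + (eVariationOn (fun t => u j t - uinf t) (Icc 0 (2 * Real.pi))).toReal
  set δ : ℕ → ℝ := fun j =>
    (eVariationOn (fun t => v j t - vinf t) (Icc 0 (2 * Real.pi))).toReal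
  set M := μinf.totalVariation.real univ
  have hbound :
      ∀ᶠ j in atTop, ‖sInt (μ j) (u j) - sInt μinf uinf‖ ≤ ε j * (M + δ j) + C * δ j := by
    filter_upwards [huVar.eventually_lt_const ENNReal.zero_lt_top,
      hvVar.eventually_lt_const ENNReal.zero_lt_top] with j huj hvj
    have := abs_sInt_sub_sInt_le_of_isStieltjesOn hπ ⟨hμsupp j, hμ j⟩ ⟨hμinfsupp, hμinf⟩
      (hu j) huinf (hv j) hvinf (fun x hx => (Real.norm_eq_abs _).symm.trans_le (hC x hx))
      huj.ne hvj.ne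
    rwa [sub_zero, ← Real.norm_eq_abs] at this
  have hε : Tendsto ε atTop (𝓝 0) := by
    simpa using (huL1.div_const _).add ((ENNReal.tendsto_toReal ENNReal.zero_ne_top).comp huVar)
  have hδ : Tendsto δ atTop (𝓝 0) := by
    simpa [δ, Function.comp_def] using (ENNReal.tendsto_toReal ENNReal.zero_ne_top).comp hvVar
  have hlim : Tendsto (fun j => ε j * (M + δ j) + C * δ j) atTop (𝓝 0) := by
    simpa using (hε.mul (tendsto_const_nhds.add hδ)).add (hδ.const_mul C)
  exact tendsto_sub_nhds_zero_iff.1 (squeeze_zero_norm' hbound hlim)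

/-- Let `u_j, v_j : [0,2π] → ℝ` (`j ∈ ℕ ∪ {∞}`) be continuous with
`v_j` of bounded variation, and let `μ_j` be the Stieltjes measures of `v_j` on `(0,2π]`.
If `u_j → u_∞` and `v_j → v_∞` in `L¹` and in variation, then
`∫_{(0,2π]} u_j dμ_j → ∫_{(0,2π]} u_∞ dμ_∞`. -/
theorem stmt13 (u v : ℕ → ℝ → ℝ) (uinf vinf : ℝ → ℝ)
    (hu : ∀ j, ContinuousOn (u j) (Set.Icc 0 (2 * Real.pi)))
    (hv : ∀ j, ContinuousOn (v j) (Set.Icc 0 (2 * Real.pi)))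
    (huinf : ContinuousOn uinf (Set.Icc 0 (2 * Real.pi)))
    (hvinf : ContinuousOn vinf (Set.Icc 0 (2 * Real.pi)))
    (hvBV : ∀ j, eVariationOn (v j) (Set.Icc 0 (2 * Real.pi)) < ⊤)
    (hvinfBV : eVariationOn vinf (Set.Icc 0 (2 * Real.pi)) < ⊤)
    (μ : ℕ → SignedMeasure ℝ) (μinf : SignedMeasure ℝ)
    (hμsupp : ∀ j, (μ j).totalVariation (Set.Ioc 0 (2 * Real.pi))ᶜ = 0)
    (hμinfsupp : μinf.totalVariation (Set.Ioc 0 (2 * Real.pi))ᶜ = 0)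
    (hμ : ∀ j, ∀ a b : ℝ, 0 ≤ a → a ≤ b → b ≤ 2 * Real.pi →
      μ j (Set.Ioc a b) = v j b - v j a)
    (hμinf : ∀ a b : ℝ, 0 ≤ a → a ≤ b → b ≤ 2 * Real.pi →
      μinf (Set.Ioc a b) = vinf b - vinf a)
    (huL1 : Tendsto (fun j => ∫ t in Set.Icc 0 (2 * Real.pi), |u j t - uinf t|)
      atTop (𝓝 0))
    (huVar : Tendsto (fun j => eVariationOn (fun t => u j t - uinf t)
      (Set.Icc 0 (2 * Real.pi))) atTop (𝓝 0))
    (hvL1 : Tendsto (fun j => ∫ t in Set.Icc 0 (2 * Real.pi), |v j t - vinf t|)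
      atTop (𝓝 0))
    (hvVar : Tendsto (fun j => eVariationOn (fun t => v j t - vinf t)
      (Set.Icc 0 (2 * Real.pi))) atTop (𝓝 0)) :
    Tendsto (fun j => sInt (μ j) (u j)) atTop (𝓝 (sInt μinf uinf)) :=
  stmt13_general u v uinf vinf hu hv huinf hvinf μ μinf hμsupp hμinfsupp hμ hμinf huL1 huVar hvVar
end
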